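/- arXiv:1408.4710 — 3 statements merged into one kernel-verified Lean document; each statement's English description precedes it below -/
import Mathlib

section
/- Let S(A) = {a_n} be an independent Stanley sequence, let k ≥ κ(A), set c = a_{2^k} and A_k = {a_0, a_1, ..., a_{2^k − 1}}, and suppose a_{2^k − 1} ≥ λ(A) + ω(A). Then for every integer x, the set A_k + x covers every integer in the set ([x, c + x) \ ((A_k ∪ O(A)) + x)) ∪ (O(A) + c + x). -/
/-- A set of integers is 3-free if it contains no 3-term arithmetic progression. -/
def ThreeFreeSet (S : Set ℤ) : Prop :=
  ∀ x ∈ S, ∀ y ∈ S, ∀ z ∈ S, x < y → y < z → x + z ≠ 2 * y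

/-- `a` is the Stanley sequence generated greedily from the finite 3-free set `A`
of nonnegative integers containing 0: `a` first enumerates `A` in increasing order,
and for `n ≥ |A|`, `a n` is the least integer exceeding `a (n-1)` keeping the
set of terms so far 3-free. -/
def IsStanleySeq (A : Finset ℤ) (a : ℕ → ℤ) : Prop :=
  (0 : ℤ) ∈ A ∧ (∀ x ∈ A, 0 ≤ x) ∧ ThreeFreeSet ↑A ∧
  StrictMono a ∧ (∀ i < A.card, a i ∈ A) ∧
  ∀ n, A.card ≤ n →
    IsLeast {m : ℤ | a (n - 1) < m ∧ ThreeFreeSet (a '' Set.Iio n ∪ {m})} (a n)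

/-- The two defining conditions of an independent Stanley sequence,
for a given λ and κ. -/
def IndepParams (a : ℕ → ℤ) (lam : ℤ) (κ : ℕ) : Prop :=
  ∀ k, κ ≤ k →
    (∀ i < 2 ^ k, a (2 ^ k + i) = a (2 ^ k) + a i) ∧
    a (2 ^ k) = 2 * a (2 ^ k - 1) + 1 - lam

/-- A Stanley sequence is independent if `IndepParams` holds for some λ and κ. -/
def Independent (a : ℕ → ℤ) : Prop := ∃ lam κ, IndepParams a lam κ

/-- κ(A): the minimal κ witnessing independence. -/
noncomputable def kappa (a : ℕ → ℤ) : ℕ := sInf {κ | ∃ lam, IndepParams a lam κ}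

/-- λ(A), recovered from the defining equation at k = κ(A). -/
noncomputable def lambdaA (a : ℕ → ℤ) : ℤ :=
  2 * a (2 ^ kappa a - 1) + 1 - a (2 ^ kappa a)

/-- The repeat factor ρ(A) = a_{2^{κ(A)}}. -/
noncomputable def rho (a : ℕ → ℤ) : ℤ := a (2 ^ kappa a)

/-- The scaling factor α(A), satisfying a_{2^k} = α·3^k for all k ≥ κ(A). -/
noncomputable def scalingFactor (a : ℕ → ℤ) : ℚ :=
  (a (2 ^ kappa a) : ℚ) / 3 ^ kappa a

/-- An integer `x` is covered by a set `S` if there are `y < z < x` in `S`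
with `y, z, x` in arithmetic progression. -/
def Covers (S : Set ℤ) (x : ℤ) : Prop :=
  ∃ y z, y ∈ S ∧ z ∈ S ∧ y < z ∧ z < x ∧ 2 * z = y + x

/-- An integer `x` is jointly covered by `S` and `T` if there are `y < z < x`
with `y ∈ S`, `z ∈ T`, and `y, z, x` in arithmetic progression. -/
def JointlyCovers (S T : Set ℤ) (x : ℤ) : Prop :=
  ∃ y z, y ∈ S ∧ z ∈ T ∧ y < z ∧ z < x ∧ 2 * z = y + x

/-- O(A): nonnegative integers neither in the Stanley sequence nor covered by it. -/
def OSet (a : ℕ → ℤ) : Set ℤ :=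
  {x | 0 ≤ x ∧ x ∉ Set.range a ∧ ¬ Covers (Set.range a) x}

/-- ω(A): the maximum element of O(A). -/
noncomputable def omegaA (a : ℕ → ℤ) : ℤ := sSup (OSet a)

/-- The translate `S + t` of a set of integers. -/
def shift (S : Set ℤ) (t : ℤ) : Set ℤ := (· + t) '' S

/-- A triadic number: a rational whose denominator in lowest terms is a power of 3. -/
def IsTriadic (q : ℚ) : Prop := ∃ j : ℕ, q.den = 3 ^ j

/-! For `k ≥ κ(A)` the first `2^(k+1)` terms of the sequence are `A_k ∪ (A_k + c)`, where
`A_k ⊆ [0, m]` with `m = a_{2^k - 1}` and `c = 2m + 1 - λ`. A non-term `w ∈ [0, c)` outside `O(A)`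
is covered by terms below `w`, all of which lie in `A_k`. For `w ∈ O(A)`, the number `w + c` is
neither a term (else `w` would be one) nor in `O(A)` (it exceeds `ω`), so it is covered by terms
`y < z`. If `z` were in `A_k + c`, then either `y ∈ A_k + c` and translating back covers `w`,
or `y ∈ A_k` and `y = 2z - w - c ≥ c - w > m`; both are impossible, since `w ≤ ω ≤ m - λ`.
-/

lemma Covers.shift {S : Set ℤ} {w : ℤ} (h : Covers S w) (t : ℤ) :
    Covers (shift S t) (w + t) := by
  obtain ⟨y, z, hy, hz, hyz, hzw, hAP⟩ := h
  exact ⟨y + t, z + t, ⟨y, hy, rfl⟩, ⟨z, hz, rfl⟩, by omega, by omega, by omega⟩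

lemma Covers.image_Iio {a : ℕ → ℤ} (hmono : StrictMono a) {w : ℤ} {n : ℕ}
    (h : Covers (Set.range a) w) (hw : w ≤ a n) : Covers (a '' Set.Iio n) w := by
  obtain ⟨_, _, ⟨i, rfl⟩, ⟨j, rfl⟩, hij, hjw, hAP⟩ := h
  have hjn : j < n := hmono.lt_iff_lt.mp (hjw.trans_le hw)
  exact ⟨a i, a j, ⟨i, (hmono.lt_iff_lt.mp hij).trans hjn, rfl⟩, ⟨j, hjn, rfl⟩, hij, hjw, hAP⟩

lemma covers_of_notMem_oSet {a : ℕ → ℤ} {w : ℤ} (hw : 0 ≤ w) (hwa : w ∉ Set.range a)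
    (hwO : w ∉ OSet a) : Covers (Set.range a) w :=
  not_not.mp fun hcov => hwO ⟨hw, hwa, hcov⟩

lemma ThreeFreeSet.union_singleton {S : Set ℤ} {x : ℤ} (hS : ThreeFreeSet S)
    (hlt : ∀ s ∈ S, s < x) (hx : ¬ Covers S x) : ThreeFreeSet (S ∪ {x}) := by
  rintro p hp q hq r hr hpq hqr hAP
  simp only [Set.union_singleton, Set.mem_insert_iff] at hp hq hr
  rcases hr with rfl | hr
  · have hp' : p ∈ S := hp.resolve_left (by omega)
    have hq' : q ∈ S := hq.resolve_left (by omega)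
    exact hx ⟨p, q, hp', hq', hpq, hqr, by omega⟩
  · have hrx := hlt r hr
    exact hS p (hp.resolve_left (by omega)) q (hq.resolve_left (by omega)) r hr hpq hqr hAP

namespace IsStanleySeq

variable {A : Finset ℤ} {a : ℕ → ℤ}

lemma strictMono (hA : IsStanleySeq A a) : StrictMono a := hA.2.2.2.1

lemma isLeast (hA : IsStanleySeq A a) {n : ℕ} (hn : A.card ≤ n) :
    IsLeast {m : ℤ | a (n - 1) < m ∧ ThreeFreeSet (a '' Set.Iio n ∪ {m})} (a n) :=
  hA.2.2.2.2.2 n hn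

lemma nonneg (hA : IsStanleySeq A a) (n : ℕ) : 0 ≤ a n := by
  obtain ⟨h0, hAnonneg, -, hmono, hinit, -⟩ := hA
  exact (hAnonneg _ (hinit 0 (Finset.card_pos.mpr ⟨0, h0⟩))).trans (hmono.monotone n.zero_le)

lemma covers_of_notMem_range (hA : IsStanleySeq A a) {x : ℤ} (hx : a (A.card - 1) < x)
    (hxa : x ∉ Set.range a) : Covers (Set.range a) x := by
  by_contra hcov
  have hex : ∃ n, x < a n := by
    obtain ⟨_, ⟨n, rfl⟩, hxn⟩ :=
      not_bddAbove_iff.mp hA.strictMono.not_bddAbove_range_of_isSuccArchimedean x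
    exact ⟨n, hxn⟩
  set n := Nat.find hex
  have hxn : x < a n := Nat.find_spec hex
  have hn : A.card ≤ n := by
    by_contra! h
    exact (hx.trans hxn).not_ge (hA.strictMono.monotone (show n ≤ A.card - 1 by omega))
  have hn0 : n - 1 < n := by have := Finset.card_pos.mpr ⟨0, hA.1⟩; omega
  have hprev : a (n - 1) < x :=
    lt_of_le_of_ne (not_lt.mp (Nat.find_min hex hn0)) fun h => hxa ⟨_, h⟩
  have hbelow : ∀ s ∈ a '' Set.Iio n, s < x := by
    rintro _ ⟨i, hi, rfl⟩
    exact (hA.strictMono.monotone (by simp only [Set.mem_Iio] at hi; omega)).trans_lt hprev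
  have hfree : ThreeFreeSet (a '' Set.Iio n) :=
    fun p hp q hq r hr => (hA.isLeast hn).1.2 p (.inl hp) q (.inl hq) r (.inl hr)
  refine hxn.not_ge ((hA.isLeast hn).2 ⟨hprev, hfree.union_singleton hbelow ?_⟩)
  rintro ⟨y, z, ⟨i, -, rfl⟩, ⟨j, -, rfl⟩, hyz⟩
  exact hcov ⟨a i, a j, ⟨i, rfl⟩, ⟨j, rfl⟩, hyz⟩

lemma bddAbove_oSet (hA : IsStanleySeq A a) : BddAbove (OSet a) :=
  ⟨a (A.card - 1), fun _ hx => not_lt.mp fun h => hx.2.2 (hA.covers_of_notMem_range h hx.2.1)⟩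

lemma le_omegaA (hA : IsStanleySeq A a) {w : ℤ} (hw : w ∈ OSet a) : w ≤ omegaA a :=
  le_csSup hA.bddAbove_oSet hw

end IsStanleySeq

lemma indepParams_kappa {a : ℕ → ℤ} (hInd : Independent a) :
    IndepParams a (lambdaA a) (kappa a) := by
  obtain ⟨lam, κ, h⟩ := hInd
  obtain ⟨lam', h'⟩ : kappa a ∈ {κ | ∃ lam, IndepParams a lam κ} := Nat.sInf_mem ⟨κ, lam, h⟩
  have hlam : lam' = lambdaA a := by
    have := (h' (kappa a) le_rfl).2
    unfold lambdaA
    omega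
  exact hlam ▸ h'

namespace IndepParams

variable {a : ℕ → ℤ} {lam : ℤ} {κ k : ℕ}

lemma apply_two_pow_succ (hIP : IndepParams a lam κ) (hk : κ ≤ k) :
    a (2 ^ (k + 1)) = 3 * a (2 ^ k) := by
  have hidx : 2 ^ (k + 1) - 1 = 2 ^ k + (2 ^ k - 1) := by
    have := Nat.one_le_two_pow (n := k); rw [pow_succ]; omega
  rw [(hIP (k + 1) (hk.trans k.le_succ)).2, hidx, (hIP k hk).1 _ (by simp), (hIP k hk).2]
  ring

lemma apply_eq_add_of_lt (hIP : IndepParams a lam κ) (hk : κ ≤ k) (hmono : StrictMono a)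
    {j : ℕ} (hj : 2 ^ k ≤ j) (hjc : a j < 3 * a (2 ^ k)) :
    a j = a (2 ^ k) + a (j - 2 ^ k) := by
  have hj' : j < 2 ^ (k + 1) := hmono.lt_iff_lt.mp (hIP.apply_two_pow_succ hk ▸ hjc)
  have := (hIP k hk).1 (j - 2 ^ k) (by rw [pow_succ] at hj'; omega)
  rwa [Nat.add_sub_cancel' hj] at this

end IndepParams

lemma covers_of_lt_of_notMem {a : ℕ → ℤ} (hmono : StrictMono a) {n : ℕ} {w : ℤ} (hw : 0 ≤ w)
    (hwn : w < a n) (hwA : w ∉ a '' Set.Iio n) (hwO : w ∉ OSet a) :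
    Covers (a '' Set.Iio n) w := by
  have hwa : w ∉ Set.range a := by
    rintro ⟨i, rfl⟩
    exact hwA ⟨i, hmono.lt_iff_lt.mp hwn, rfl⟩
  exact (covers_of_notMem_oSet hw hwa hwO).image_Iio hmono hwn.le

lemma covers_add_of_mem_oSet {A : Finset ℤ} {a : ℕ → ℤ} (hA : IsStanleySeq A a) {lam : ℤ}
    {κ k : ℕ} (hIP : IndepParams a lam κ) (hk : κ ≤ k)
    (hbound : lam + omegaA a ≤ a (2 ^ k - 1)) {w : ℤ} (hw : w ∈ OSet a) :
    Covers (a '' Set.Iio (2 ^ k)) (w + a (2 ^ k)) := by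
  set c := a (2 ^ k)
  set m := a (2 ^ k - 1)
  have hmono := hA.strictMono
  have hcm : c = 2 * m + 1 - lam := (hIP k hk).2
  have hwm : w ≤ m - lam := by linarith [hA.le_omegaA hw]
  have hm := hA.nonneg (2 ^ k - 1)
  have hsplit : ∀ j, c ≤ a j → a j ≤ w + c → a j = c + a (j - 2 ^ k) := fun j h1 h2 =>
    hIP.apply_eq_add_of_lt hk hmono (hmono.le_iff_le.mp h1) (by linarith [hw.1])
  have hwca : w + c ∉ Set.range a := by
    rintro ⟨i, hi⟩
    have := hsplit i (by linarith [hw.1]) hi.le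
    exact hw.2.1 ⟨i - 2 ^ k, by omega⟩
  have hwcO : w + c ∉ OSet a := fun h => by linarith [hA.le_omegaA h, hw.1]
  obtain ⟨_, _, ⟨i, rfl⟩, ⟨j, rfl⟩, hij, hjw, hAP⟩ :=
    covers_of_notMem_oSet (by linarith [hw.1]) hwca hwcO
  have hj : j < 2 ^ k := by
    by_contra! hj
    have hj' := hsplit j (hmono.monotone hj) hjw.le
    by_cases hi : i < 2 ^ k
    · have : a i ≤ m := hmono.monotone (by omega)
      linarith [hA.nonneg (j - 2 ^ k)]
    · have hi' := hsplit i (hmono.monotone (not_lt.mp hi)) (hij.trans hjw).le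
      exact hw.2.2 ⟨_, _, ⟨i - 2 ^ k, rfl⟩, ⟨j - 2 ^ k, rfl⟩, by omega, by omega, by omega⟩
  exact ⟨a i, a j, ⟨i, (hmono.lt_iff_lt.mp hij).trans hj, rfl⟩, ⟨j, hj, rfl⟩, hij, hjw, hAP⟩

/-- Lemma 3.2(a): `A_k + x` covers
`([x, c+x) \ ((A_k ∪ O(A)) + x)) ∪ (O(A) + c + x)`. -/
theorem cover_part_a (A : Finset ℤ) (a : ℕ → ℤ)
    (hA : IsStanleySeq A a) (hInd : Independent a) (k : ℕ) (hk : kappa a ≤ k)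
    (c : ℤ) (hc : c = a (2 ^ k))
    (Ak : Set ℤ) (hAk : Ak = a '' Set.Iio (2 ^ k))
    (hbound : lambdaA a + omegaA a ≤ a (2 ^ k - 1)) :
    ∀ x : ℤ, ∀ z ∈ (Set.Ico x (c + x) \ shift (Ak ∪ OSet a) x) ∪ shift (OSet a) (c + x),
      Covers (shift Ak x) z := by
  subst hc hAk
  rintro x z (⟨⟨hxz, hzc⟩, hz⟩ | ⟨w, hw, rfl⟩)
  · have hcov := covers_of_lt_of_notMem hA.strictMono (sub_nonneg.mpr hxz) (by omega)
      (fun h => hz ⟨z - x, .inl h, by simp⟩) (fun h => hz ⟨z - x, .inr h, by simp⟩)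
    simpa using hcov.shift x
  · show Covers _ (w + (a (2 ^ k) + x))
    rw [← add_assoc]
    exact (covers_add_of_mem_oSet hA (indepParams_kappa hInd) hk hbound hw).shift x
end

section
/- Let S(A) = {a_n} be an independent Stanley sequence. Then for every k ≥ κ(A), a_{2^{k+1}} = 3·a_{2^k}; consequently a_{2^k} = 3^{k − κ(A)}·a_{2^{κ(A)}} for all k ≥ κ(A), i.e., there is a positive constant α with a_{2^k} = α·3^k for all k ≥ κ(A). -/
/-
Comparing the defining relation `a_{2^k} = 2 a_{2^k - 1} + 1 - λ` at levels `k` and `k + 1`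
eliminates `λ`: since `2^{k+1} - 1 = 2^k + (2^k - 1)`, independence gives
`a_{2^{k+1} - 1} = a_{2^k} + a_{2^k - 1}`, hence
`a_{2^{k+1}} = 2 a_{2^k} + (2 a_{2^k - 1} + 1 - λ) = 3 a_{2^k}`.
-/

theorem IndepParams.apply_two_pow_succ_s14 {a : ℕ → ℤ} {lam : ℤ} {κ : ℕ}
    (h : IndepParams a lam κ) {k : ℕ} (hk : κ ≤ k) :
    a (2 ^ (k + 1)) = 3 * a (2 ^ k) := by
  obtain ⟨hsplit, hk_rel⟩ := h k hk
  have hsucc_rel := (h (k + 1) (hk.trans k.le_succ)).2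
  have hidx : 2 ^ (k + 1) - 1 = 2 ^ k + (2 ^ k - 1) := by
    have := Nat.two_pow_pos k
    rw [pow_succ]
    omega
  have hlast : a (2 ^ (k + 1) - 1) = a (2 ^ k) + a (2 ^ k - 1) := by
    rw [hidx]
    exact hsplit _ (Nat.sub_lt (Nat.two_pow_pos k) one_pos)
  rw [hsucc_rel, hlast]
  linarith

theorem Independent.exists_indepParams_kappa {a : ℕ → ℤ} (h : Independent a) :
    ∃ lam, IndepParams a lam (kappa a) := by
  obtain ⟨lam, κ, hκ⟩ := h
  exact Nat.sInf_mem (s := {κ | ∃ lam, IndepParams a lam κ}) ⟨κ, lam, hκ⟩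

theorem eq_pow_sub_mul_of_succ_eq_mul {M : Type*} [Monoid M] {f : ℕ → M} {r : M} {m : ℕ}
    (h : ∀ k, m ≤ k → f (k + 1) = r * f k) {k : ℕ} (hk : m ≤ k) :
    f k = r ^ (k - m) * f m := by
  induction k, hk using Nat.le_induction with
  | base => simp
  | succ n hn ih =>
    rw [h n hn, ih, Nat.sub_add_comm hn, pow_succ', mul_assoc]

theorem IsStanleySeq.pos {A : Finset ℤ} {a : ℕ → ℤ} (hA : IsStanleySeq A a) {n : ℕ}
    (hn : 0 < n) : 0 < a n := by
  obtain ⟨h0A, hnonneg, -, hmono, henum, -⟩ := hA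
  have ha0 : a 0 ∈ A := henum 0 (Finset.card_pos.mpr ⟨0, h0A⟩)
  exact (hnonneg _ ha0).trans_lt (hmono hn)

/-- for an independent Stanley sequence, a_{2^{k+1}} = 3a_{2^k} for
all k ≥ κ(A); hence a_{2^k} = 3^{k−κ(A)}·a_{2^{κ(A)}}, i.e. there is a positive
constant α with a_{2^k} = α·3^k for all k ≥ κ(A). -/
theorem geometric_growth_of_independent (A : Finset ℤ) (a : ℕ → ℤ)
    (hA : IsStanleySeq A a) (hInd : Independent a) :
    (∀ k : ℕ, kappa a ≤ k → a (2 ^ (k + 1)) = 3 * a (2 ^ k)) ∧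
    (∀ k : ℕ, kappa a ≤ k → a (2 ^ k) = 3 ^ (k - kappa a) * a (2 ^ kappa a)) ∧
    ∃ α : ℚ, 0 < α ∧ ∀ k : ℕ, kappa a ≤ k → (a (2 ^ k) : ℚ) = α * 3 ^ k := by
  obtain ⟨lam, hκ⟩ := hInd.exists_indepParams_kappa
  have hstep : ∀ k, kappa a ≤ k → a (2 ^ (k + 1)) = 3 * a (2 ^ k) :=
    fun k hk => hκ.apply_two_pow_succ_s14 hk
  have hgeom : ∀ k, kappa a ≤ k → a (2 ^ k) = 3 ^ (k - kappa a) * a (2 ^ kappa a) :=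
    fun k hk => eq_pow_sub_mul_of_succ_eq_mul (f := fun k => a (2 ^ k)) hstep hk
  refine ⟨hstep, hgeom, scalingFactor a, ?_, fun k hk => ?_⟩
  · have hρ := hA.pos (Nat.two_pow_pos (kappa a))
    unfold scalingFactor
    positivity
  · rw [hgeom k hk, scalingFactor, ← Nat.sub_add_cancel hk, pow_add, Nat.add_sub_cancel]
    push_cast
    field_simp
end

section
/- Let S(0) = {s_n} be the Stanley sequence generated by the set {0}. Then for every n ≥ 0, s_n equals the number obtained by writing n in binary and interpreting the resulting digit string in ternary; that is, if n = Σ_i ε_i·2^i with each ε_i ∈ {0,1}, then s_n = Σ_i ε_i·3^i. In particular, s_{2^k} = 3^k for every k ≥ 0. -/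
/-!
The numbers whose ternary digits are all `0` or `1` are exactly the values of the map reading a
binary numeral in ternary, and that map is increasing. This set is 3-free: in `x + z = 2 * y` with
such digits there are no carries, so `x` and `z` agree digit by digit. Every other `m ≥ 0` is the
top of a progression `f < g < m` inside the set: digitwise, a digit `2` of `m` is matched by `0` in
`f` and `1` in `g`, a digit `d ≤ 1` by `d` in both. Hence the greedy construction of `S(0)` can
neither skip an element of the set nor take anything else, so it enumerates the set in order.
-/

theorem ThreeFreeSet.mono {S T : Set ℤ} (hT : ThreeFreeSet T) (hST : S ⊆ T) : ThreeFreeSet S :=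
  fun x hx y hy z hz => hT x (hST hx) y (hST hy) z (hST hz)

theorem IsStanleySeq.eq_of_forall_covers {s e : ℕ → ℤ} (hs : IsStanleySeq {0} s)
    (he : StrictMono e) (he0 : e 0 = 0) (hfree : ThreeFreeSet (Set.range e))
    (hcov : ∀ x, 0 ≤ x → x ∉ Set.range e → Covers (Set.range e) x) : s = e := by
  obtain ⟨-, -, -, -, hinit, hleast⟩ := hs
  funext n
  induction n using Nat.strong_induction_on with
  | _ n ih =>
  cases n with
  | zero => simpa [he0] using hinit 0 (by simp)
  | succ k =>
  have hL := hleast (k + 1) (by simp)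
  have himg : s '' Set.Iio (k + 1) = e '' Set.Iio (k + 1) := Set.image_congr fun j hj => ih j hj
  rw [Nat.add_sub_cancel, ih k k.lt_succ_self, himg] at hL
  refine le_antisymm (hL.2 ⟨he k.lt_succ_self, hfree.mono ?_⟩) ?_
  · rintro _ (⟨j, -, rfl⟩ | rfl) <;> exact Set.mem_range_self _
  -- a smaller term lies strictly between `e k` and `e (k + 1)`, so earlier terms cover it
  by_contra! hlt
  obtain ⟨hgt, hLfree⟩ := hL.1
  have hnot : s (k + 1) ∉ Set.range e := by
    rintro ⟨j, hj⟩
    rw [← hj] at hgt hlt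
    have := he.lt_iff_lt.1 hgt
    have := he.lt_iff_lt.1 hlt
    omega
  have hpos : 0 ≤ s (k + 1) := by
    have := he.monotone (Nat.zero_le k)
    omega
  obtain ⟨_, _, ⟨i, rfl⟩, ⟨j, rfl⟩, hij, hjs, hap⟩ := hcov _ hpos hnot
  have hj : j < k + 1 := he.lt_iff_lt.1 (hjs.trans hlt)
  have hi : i < k + 1 := (he.lt_iff_lt.1 hij).trans hj
  exact hLfree _ (Or.inl ⟨i, hi, rfl⟩) _ (Or.inl ⟨j, hj, rfl⟩) _ (Or.inr rfl) hij hjs (by omega)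

theorem Nat.digits_ofDigits_digits {b c : ℕ} (hc : 1 < c) (n : ℕ)
    (h : ∀ d ∈ b.digits n, d < c) : c.digits (Nat.ofDigits c (b.digits n)) = b.digits n :=
  Nat.digits_ofDigits c hc _ h fun hne =>
    Nat.getLast_digit_ne_zero b fun hn => hne (by rw [hn, Nat.digits_zero])

def binToTernary (n : ℕ) : ℕ := Nat.ofDigits 3 (Nat.digits 2 n)

def ZeroOneTernary (m : ℕ) : Prop := ∀ d ∈ Nat.digits 3 m, d < 2

theorem binToTernary_eq (n : ℕ) : binToTernary n = n % 2 + 3 * binToTernary (n / 2) := by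
  rcases Nat.eq_zero_or_pos n with rfl | hn
  · simp [binToTernary]
  · rw [binToTernary, Nat.digits_eq_cons_digits_div (by norm_num) hn.ne', Nat.ofDigits_cons,
      binToTernary]

theorem binToTernary_strictMono : StrictMono binToTernary := by
  refine strictMono_nat_of_lt_succ fun n => ?_
  induction n using Nat.strong_induction_on with
  | _ n ih =>
  rw [binToTernary_eq n, binToTernary_eq (n + 1)]
  rcases Nat.mod_two_eq_zero_or_one n with h | h
  · rw [show (n + 1) / 2 = n / 2 by omega]
    omega
  · rw [show (n + 1) / 2 = n / 2 + 1 by omega]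
    have := ih (n / 2) (by omega)
    omega

theorem binToTernary_two_pow (k : ℕ) : binToTernary (2 ^ k) = 3 ^ k := by
  have h := Nat.digits_base_pow_mul (b := 2) (k := k) (by norm_num) one_pos
  rw [mul_one] at h
  rw [binToTernary, h]
  simp [Nat.ofDigits_append, Nat.ofDigits_replicate_zero]

theorem zeroOneTernary_binToTernary (n : ℕ) : ZeroOneTernary (binToTernary n) := by
  have h2 : ∀ d ∈ Nat.digits 2 n, d < 2 := fun d => Nat.digits_lt_base (by norm_num)
  rw [ZeroOneTernary, binToTernary,
    Nat.digits_ofDigits_digits (by norm_num) n fun d hd => (h2 d hd).trans (by norm_num)]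
  exact h2

theorem ZeroOneTernary.exists_binToTernary_eq {m : ℕ} (hm : ZeroOneTernary m) :
    ∃ n, binToTernary n = m :=
  ⟨Nat.ofDigits 2 (Nat.digits 3 m), by
    rw [binToTernary, Nat.digits_ofDigits_digits (by norm_num) m hm, Nat.ofDigits_digits]⟩

theorem natCast_mem_range_binToTernary_iff (m : ℕ) :
    (m : ℤ) ∈ Set.range (fun n => (binToTernary n : ℤ)) ↔ ZeroOneTernary m := by
  constructor
  · rintro ⟨n, hn⟩
    exact Nat.cast_injective hn ▸ zeroOneTernary_binToTernary n
  · intro hm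
    obtain ⟨n, rfl⟩ := hm.exists_binToTernary_eq
    exact ⟨n, rfl⟩

theorem zeroOneTernary_iff (m : ℕ) :
    ZeroOneTernary m ↔ m % 3 < 2 ∧ ZeroOneTernary (m / 3) := by
  rcases Nat.eq_zero_or_pos m with rfl | hm
  · simp [ZeroOneTernary]
  · simp [ZeroOneTernary, Nat.digits_eq_cons_digits_div (by norm_num : 1 < 3) hm.ne']

theorem zeroOneTernary_three_mul_add {a d : ℕ} (hd : d < 2) :
    ZeroOneTernary (3 * a + d) ↔ ZeroOneTernary a := by
  rw [zeroOneTernary_iff, show (3 * a + d) / 3 = a by omega, show (3 * a + d) % 3 = d by omega]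
  exact and_iff_right hd

theorem ZeroOneTernary.eq_of_add_eq_two_mul {x y z : ℕ} (hx : ZeroOneTernary x)
    (hy : ZeroOneTernary y) (hz : ZeroOneTernary z) (h : x + z = 2 * y) : x = z := by
  induction y using Nat.strong_induction_on generalizing x z with
  | _ y ih =>
  rcases Nat.eq_zero_or_pos y with rfl | hy0
  · omega
  rw [zeroOneTernary_iff] at hx hy hz
  have := ih (y / 3) (by omega) hx.2 hy.2 hz.2 (by omega)
  omega

theorem exists_zeroOneTernary_add_eq_two_mul (m : ℕ) :
    ∃ f g, ZeroOneTernary f ∧ ZeroOneTernary g ∧ g ≤ m ∧ f + m = 2 * g := by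
  induction m using Nat.strong_induction_on with
  | _ m ih =>
  rcases Nat.eq_zero_or_pos m with rfl | hm
  · exact ⟨0, 0, by simp [ZeroOneTernary], by simp [ZeroOneTernary], le_rfl, rfl⟩
  obtain ⟨f, g, hf, hg, hgm, hfg⟩ := ih (m / 3) (by omega)
  have digit : ∀ df dg, df < 2 → dg < 2 → df + m % 3 = 2 * dg →
      ∃ f g, ZeroOneTernary f ∧ ZeroOneTernary g ∧ g ≤ m ∧ f + m = 2 * g :=
    fun df dg hdf hdg h => ⟨3 * f + df, 3 * g + dg, (zeroOneTernary_three_mul_add hdf).2 hf,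
      (zeroOneTernary_three_mul_add hdg).2 hg, by omega, by omega⟩
  rcases (by omega : m % 3 = 0 ∨ m % 3 = 1 ∨ m % 3 = 2) with h | h | h
  · exact digit 0 0 (by norm_num) (by norm_num) (by omega)
  · exact digit 1 1 (by norm_num) (by norm_num) (by omega)
  · exact digit 0 1 (by norm_num) (by norm_num) (by omega)

theorem threeFreeSet_range_binToTernary :
    ThreeFreeSet (Set.range fun n => (binToTernary n : ℤ)) := by
  rintro _ ⟨a, rfl⟩ _ ⟨b, rfl⟩ _ ⟨c, rfl⟩ hab hbc h
  dsimp only at hab hbc h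
  norm_cast at hab hbc h
  have := (zeroOneTernary_binToTernary a).eq_of_add_eq_two_mul (zeroOneTernary_binToTernary b)
    (zeroOneTernary_binToTernary c) h
  omega

theorem covers_range_binToTernary (x : ℤ) (hx : 0 ≤ x)
    (hnot : x ∉ Set.range fun n => (binToTernary n : ℤ)) :
    Covers (Set.range fun n => (binToTernary n : ℤ)) x := by
  lift x to ℕ using hx
  rw [natCast_mem_range_binToTernary_iff] at hnot
  obtain ⟨f, g, hf, hg, hgx, hfg⟩ := exists_zeroOneTernary_add_eq_two_mul x
  have hgx' : g < x := lt_of_le_of_ne hgx fun hgx_eq => hnot (hgx_eq ▸ hg)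
  exact ⟨f, g, (natCast_mem_range_binToTernary_iff f).2 hf,
    (natCast_mem_range_binToTernary_iff g).2 hg, by omega, by omega, by omega⟩

/-- the n-th term of S(0) is obtained by writing n in binary and
reading it in ternary; in particular s_{2^k} = 3^k. -/
theorem stanley_zero_binary_to_ternary (s : ℕ → ℤ) (hs : IsStanleySeq {0} s) :
    (∀ n : ℕ, s n = (Nat.ofDigits 3 (Nat.digits 2 n) : ℤ)) ∧
    ∀ k : ℕ, s (2 ^ k) = 3 ^ k := by
  obtain rfl : s = fun n => (binToTernary n : ℤ) :=
    hs.eq_of_forall_covers (Nat.strictMono_cast.comp binToTernary_strictMono)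
      (by simp [binToTernary]) threeFreeSet_range_binToTernary covers_range_binToTernary
  exact ⟨fun n => Nat.coe_ofDigits ℤ 3 (Nat.digits 2 n),
    fun k => by simp [binToTernary_two_pow]⟩
end
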